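/- arXiv:1007.0113 — 4 statements merged into one kernel-verified Lean document; each statement's English description precedes it below -/
import Mathlib

section
/- If (H, i) is a Kolmogorov decomposition of a positive definite kernel k : S × S → ℂ with i(S) total in H, and (G, j) is any other pair satisfying ⟨j(σ), j(σ')⟩ = k(σ,σ') for all σ,σ', then there exists a unique bounded linear isometry v : H → G with v(i(σ)) = j(σ) for all σ ∈ S. -/
open scoped ComplexOrder

/-- A kernel `k : S × S → ℂ` is positive definite if all finite quadratic forms
`∑ᵢⱼ z̄ᵢ k(σᵢ,σⱼ) zⱼ` are nonnegative. -/
def IsPosDefKernel {S : Type*} (k : S → S → ℂ) : Prop :=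
  ∀ (n : ℕ) (σ : Fin n → S) (z : Fin n → ℂ),
    0 ≤ ∑ i, ∑ j, (starRingEnd ℂ) (z i) * k (σ i) (σ j) * z j

/-!
Every element of `H` is a limit of finite combinations `∑ zₛ i(σₛ)`, and the norm of such a
combination is determined by the Gram matrix `k`. Hence `∑ zₛ i(σₛ) ↦ ∑ zₛ j(σₛ)` is a well-defined
isometry on the dense span of `i(S)`, which extends by continuity to `H`; uniqueness holds because
a continuous linear map is determined by its values on a total set.
-/

theorem LinearMap.norm_extendOfNorm_apply_eq {𝕜 E Eₗ F : Type*} [NontriviallyNormedField 𝕜]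
    [AddCommGroup E] [Module 𝕜 E] [SeminormedAddCommGroup Eₗ] [NormedSpace 𝕜 Eₗ]
    [NormedAddCommGroup F] [NormedSpace 𝕜 F] [CompleteSpace F]
    {f : E →ₗ[𝕜] F} {e : E →ₗ[𝕜] Eₗ} (h_dense : DenseRange e) (h_norm : ∀ x, ‖f x‖ = ‖e x‖)
    (y : Eₗ) : ‖f.extendOfNorm e y‖ = ‖y‖ := by
  refine h_dense.induction (fun _ ⟨x, hx⟩ => ?_) (isClosed_eq (by fun_prop) continuous_norm) y
  rw [← hx, extendOfNorm_eq h_dense ⟨1, fun x => (h_norm x).trans_le (one_mul _).ge⟩, h_norm]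

section GramMatrix

open Finsupp

variable {𝕜 S E F : Type*} [RCLike 𝕜] [NormedAddCommGroup E] [InnerProductSpace 𝕜 E]
  [NormedAddCommGroup F] [InnerProductSpace 𝕜 F] {i : S → E} {j : S → F}

theorem inner_linearCombination_eq_of_inner_eq
    (h : ∀ a b, inner 𝕜 (i a) (i b) = inner 𝕜 (j a) (j b)) (l₁ l₂ : S →₀ 𝕜) :
    inner 𝕜 (linearCombination 𝕜 i l₁) (linearCombination 𝕜 i l₂) =
      inner 𝕜 (linearCombination 𝕜 j l₁) (linearCombination 𝕜 j l₂) := by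
  simp [linearCombination_apply, Finsupp.sum_inner, Finsupp.inner_sum, inner_smul_left,
    inner_smul_right, h]

theorem norm_linearCombination_eq_of_inner_eq
    (h : ∀ a b, inner 𝕜 (i a) (i b) = inner 𝕜 (j a) (j b)) (l : S →₀ 𝕜) :
    ‖linearCombination 𝕜 j l‖ = ‖linearCombination 𝕜 i l‖ := by
  rw [@norm_eq_sqrt_re_inner 𝕜, @norm_eq_sqrt_re_inner 𝕜,
    inner_linearCombination_eq_of_inner_eq h]

theorem exists_unique_isometry_of_inner_eq [CompleteSpace F]
    (hi : Dense (Submodule.span 𝕜 (Set.range i) : Set E))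
    (h : ∀ a b, inner 𝕜 (i a) (i b) = inner 𝕜 (j a) (j b)) :
    ∃! v : E →L[𝕜] F, (∀ x, ‖v x‖ = ‖x‖) ∧ ∀ σ, v (i σ) = j σ := by
  have h_dense : DenseRange (linearCombination 𝕜 i) := by
    rwa [DenseRange, ← LinearMap.coe_range, range_linearCombination]
  have h_norm := norm_linearCombination_eq_of_inner_eq h
  have h_bound : ∀ l, ‖linearCombination 𝕜 j l‖ ≤ 1 * ‖linearCombination 𝕜 i l‖ :=
    fun l => (h_norm l).trans_le (one_mul _).ge
  set v := (linearCombination 𝕜 j).extendOfNorm (linearCombination 𝕜 i)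
  have hv : ∀ σ, v (i σ) = j σ := fun σ => by
    simpa using LinearMap.extendOfNorm_eq h_dense ⟨1, h_bound⟩ (single σ 1)
  refine ⟨v, ⟨LinearMap.norm_extendOfNorm_apply_eq h_dense h_norm, hv⟩, ?_⟩
  rintro w ⟨-, hw⟩
  refine (LinearMap.extendOfNorm_unique h_dense 1 h_bound w (lhom_ext fun σ c => ?_)).symm
  simp [hw]

end GramMatrix

theorem kolmogorov_universal_property_general {S : Type*} (k : S → S → ℂ)
    {H : Type*} [NormedAddCommGroup H] [InnerProductSpace ℂ H]
    {G : Type*} [NormedAddCommGroup G] [InnerProductSpace ℂ G] [CompleteSpace G]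
    (i : S → H) (j : S → G)
    (hi : ∀ σ σ' : S, (inner ℂ (i σ) (i σ') : ℂ) = k σ σ')
    (htotal : Dense ((Submodule.span ℂ (Set.range i) : Submodule ℂ H) : Set H))
    (hj : ∀ σ σ' : S, (inner ℂ (j σ) (j σ') : ℂ) = k σ σ') :
    ∃! v : H →L[ℂ] G, (∀ x : H, ‖v x‖ = ‖x‖) ∧ ∀ σ : S, v (i σ) = j σ :=
  exists_unique_isometry_of_inner_eq htotal fun a b => (hi a b).trans (hj a b).symm

/-- Universal property of the minimal Kolmogorov decomposition: if `(H, i)` is a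
Kolmogorov decomposition of `k` with `i(S)` total in `H`, and `(G, j)` is any other
pair reproducing `k`, then there is a unique bounded linear isometry `v : H → G`
with `v (i σ) = j σ` for all `σ`. -/
theorem kolmogorov_universal_property {S : Type*} (k : S → S → ℂ)
    (hk : IsPosDefKernel k)
    {H : Type*} [NormedAddCommGroup H] [InnerProductSpace ℂ H] [CompleteSpace H]
    {G : Type*} [NormedAddCommGroup G] [InnerProductSpace ℂ G] [CompleteSpace G]
    (i : S → H) (j : S → G)
    (hi : ∀ σ σ' : S, (inner ℂ (i σ) (i σ') : ℂ) = k σ σ')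
    (htotal : Dense ((Submodule.span ℂ (Set.range i) : Submodule ℂ H) : Set H))
    (hj : ∀ σ σ' : S, (inner ℂ (j σ) (j σ') : ℂ) = k σ σ') :
    ∃! v : H →L[ℂ] G, (∀ x : H, ‖v x‖ = ‖x‖) ∧ ∀ σ : S, v (i σ) = j σ :=
  kolmogorov_universal_property_general k i j hi htotal hj
end

section
/- The composition of CPD-kernels is CPD: if K is a CPD-kernel over S from A to B and L is a CPD-kernel over S from B to C, then the kernel (L∘K)^{σ,σ'} := L^{σ,σ'} ∘ K^{σ,σ'} is a CPD-kernel over S from A to C. -/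
/-- A kernel `K : S × S → B(A,B)` is completely positive definite (CPD) if
`∑ᵢⱼ bᵢ* K^{σᵢ,σⱼ}(aᵢ* aⱼ) bⱼ ≥ 0` for all finite choices. -/
def IsCPDKernel {S A B : Type*} [CStarAlgebra A] [NonUnitalCStarAlgebra B]
    [PartialOrder B] [StarOrderedRing B] (K : S → S → (A →L[ℂ] B)) : Prop :=
  ∀ (n : ℕ) (σ : Fin n → S) (a : Fin n → A) (b : Fin n → B),
    0 ≤ ∑ i, ∑ j, star (b i) * K (σ i) (σ j) (star (a i) * a j) * b j

/-!
The matrix `N i j = K (σ i) (σ j) (star (a i) * a j)` over `B` satisfies `∑ bᵢ* Nᵢⱼ bⱼ ≥ 0`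
for all `b`, which over `ℂ` forces it to be Hermitian, i.e. positive semidefinite. Such a
matrix has, for every `ε > 0`, a Cholesky factorization `N + ε = Xᴴ X`: the shift makes the
corner entry invertible, and one recurses on its Schur complement. As
`(Xᴴ X) i j = ∑ₖ (X k i)* X k j`, the CPD property of `L`, applied to each row of `X`, gives
`∑ cᵢ* L(Nᵢⱼ) cⱼ + ε ∑ cᵢ* L(1) cᵢ ≥ 0`; letting `ε → 0` finishes the proof.
-/

open Finset Matrix Filter Topology

theorem Matrix.PosSemidef.sub_mul_mul {R n : Type*} [Ring R] [StarRing R] [PartialOrder R]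
    [Fintype n] {P s : Matrix n n R} (hP : P.PosSemidef) (hs : s.IsHermitian)
    (hsPs : s * P * s = s) : (P - P * s * P).PosSemidef := by
  classical
  have key : (1 - s * P)ᴴ * P * (1 - s * P) = P - P * s * P := by
    rw [conjTranspose_sub, conjTranspose_one, conjTranspose_mul, hP.isHermitian.eq, hs.eq]
    calc (1 - P * s) * P * (1 - s * P)
        = P - P * s * P - P * s * P + P * (s * P * s) * P := by noncomm_ring
      _ = P - P * s * P := by rw [hsPs]; noncomm_ring
  exact key ▸ hP.conjTranspose_mul_mul_same (1 - s * P)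

theorem Matrix.PosSemidef.schurComplement_zero {R : Type*} [Ring R] [StarRing R] [PartialOrder R]
    {n : ℕ} {P : Matrix (Fin (n + 1)) (Fin (n + 1)) R} (hP : P.PosSemidef) {w : R}
    (hw : IsSelfAdjoint w) (hwPw : w * P 0 0 * w = w) :
    (of fun i j : Fin n => P i.succ j.succ - P i.succ 0 * w * P 0 j.succ).PosSemidef := by
  have hs : (single 0 0 w : Matrix (Fin (n + 1)) (Fin (n + 1)) R).IsHermitian := by
    simp [IsHermitian, conjTranspose_single, hw.star_eq]
  convert (hP.sub_mul_mul hs (by rw [single_mul_mul_single, hwPw])).submatrix Fin.succ using 1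
  ext i j
  simp [mul_apply, single_apply, ite_and]

section ComplexStarAlgebra

variable {R : Type*} [Ring R] [StarRing R] [Algebra ℂ R] [StarModule ℂ R]

theorem star_eq_of_forall_isSelfAdjoint_smul_add_star_smul {x y : R}
    (h : ∀ z : ℂ, IsSelfAdjoint (z • x + star z • y)) : star x = y := by
  have h₁ : star x + star y = x + y := by simpa using (h 1).star_eq
  have hI : Complex.I • (y - star x) = Complex.I • (x - star y) := by
    have := (h Complex.I).star_eq
    simp only [star_add, star_neg, star_smul, Complex.star_def, Complex.conj_I, neg_smul] at this
    rw [smul_sub, smul_sub]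
    linear_combination (norm := abel_nf) this
  have h₂ : y - star x = x - star y := smul_right_injective R Complex.I_ne_zero hI
  have : (2 : ℂ) • star x = (2 : ℂ) • y := by
    rw [two_smul, two_smul]
    linear_combination (norm := abel_nf) h₁ - h₂
  exact smul_right_injective R two_ne_zero this

theorem Matrix.IsHermitian.of_forall_isSelfAdjoint_dotProduct_mulVec {n : Type*} [Fintype n]
    [DecidableEq n] {M : Matrix n n R} (h : ∀ x, IsSelfAdjoint (star x ⬝ᵥ (M *ᵥ x))) :
    M.IsHermitian := by
  have hform : ∀ i j (z : ℂ), IsSelfAdjoint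
      (M j j + (z • M j i + star z • M i j) + (star z * z) • M i i) := by
    intro i j z
    convert h ((Pi.single j 1 : n → R) + z • (Pi.single i 1 : n → R)) using 1
    simp only [RCLike.star_def, star_add, Pi.star_single, star_one, star_smul, mulVec_add,
      mulVec_single, MulOpposite.op_one, one_smul, mulVec_smul, dotProduct_add, add_dotProduct,
      single_dotProduct, col_apply, one_mul, smul_dotProduct, dotProduct_smul, smul_add, smul_smul,
      mul_comm z]
    abel
  have hdiag : ∀ i, IsSelfAdjoint (M i i) := fun i => by simpa using hform i i 0
  refine IsHermitian.ext fun i j => star_eq_of_forall_isSelfAdjoint_smul_add_star_smul fun z => ?_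
  convert ((hform i j z).sub (hdiag j)).sub ((IsSelfAdjoint.star_mul_self z).smul (hdiag i)) using 1
  abel

variable [PartialOrder R] [StarOrderedRing R]

theorem Matrix.posSemidef_iff_forall_dotProduct_mulVec_nonneg {n : Type*} [Fintype n]
    [DecidableEq n] {M : Matrix n n R} : M.PosSemidef ↔ ∀ x, 0 ≤ star x ⬝ᵥ (M *ᵥ x) :=
  ⟨PosSemidef.dotProduct_mulVec_nonneg, fun h => .of_dotProduct_mulVec_nonneg
    (.of_forall_isSelfAdjoint_dotProduct_mulVec fun x => .of_nonneg (h x)) h⟩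

end ComplexStarAlgebra

section CStarAlgebra

variable {B : Type*} [CStarAlgebra B] [PartialOrder B] [StarOrderedRing B]

theorem IsStrictlyPositive.exists_isSelfAdjoint_mul_mul_self_eq_one {a : B}
    (ha : IsStrictlyPositive a) : ∃ r : B, IsSelfAdjoint r ∧ a * (r * r) = 1 := by
  refine ⟨a ^ (-(1 / 2) : ℝ), .of_nonneg CFC.rpow_nonneg, ?_⟩
  calc a * (a ^ (-(1 / 2) : ℝ) * a ^ (-(1 / 2) : ℝ)) = a ^ (1 : ℝ) * a ^ (-1 : ℝ) := by
        rw [CFC.rpow_one a ha.nonneg, ← CFC.rpow_add ha.isUnit]; norm_num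
    _ = 1 := CFC.rpow_mul_rpow_neg 1

theorem Matrix.PosSemidef.exists_conjTranspose_mul_self_eq_add_smul_one {n : ℕ}
    {N : Matrix (Fin n) (Fin n) B} (hN : N.PosSemidef) {ε : ℝ} (hε : 0 < ε) :
    ∃ X : Matrix (Fin n) (Fin n) B, Xᴴ * X = N + ε • 1 := by
  induction n with
  | zero => exact ⟨0, Subsingleton.elim _ _⟩
  | succ n ih =>
    set P := N + ε • single 0 0 (1 : B)
    have hP : P.PosSemidef := by
      refine hN.add (PosSemidef.smul ?_ hε.le)
      rw [← diagonal_single]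
      exact PosSemidef.diagonal (Pi.single_nonneg.mpr zero_le_one)
    have hP₀₀ : IsStrictlyPositive (P 0 0) := by
      simpa [P] using
        IsStrictlyPositive.nonneg_add hN.diag_nonneg (isStrictlyPositive_one.smul hε)
    obtain ⟨r, hr, hPr⟩ := hP₀₀.exists_isSelfAdjoint_mul_mul_self_eq_one
    have hrP : r * r * P 0 0 = 1 := by
      simpa [hr.star_eq, hP.isHermitian.apply 0 0, mul_assoc] using congrArg star hPr
    have hrr : IsSelfAdjoint (r * r) := by simpa [hr.star_eq] using IsSelfAdjoint.star_mul_self r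
    obtain ⟨Z, hZ⟩ := ih (hP.schurComplement_zero hrr (by rw [mul_assoc, hPr, mul_one]))
    -- row `0` is `r * P 0 j` with `r * r = (P 0 0)⁻¹`; below it sits the factor `Z` of the
    -- Schur complement
    let X : Matrix (Fin (n + 1)) (Fin (n + 1)) B :=
      of (Fin.cons (fun j => r * P 0 j) fun k => Fin.cons 0 (Z k))
    have hrow : ∀ i j, star (r * P 0 i) * (r * P 0 j) = P i 0 * (r * r) * P 0 j := by
      intro i j
      rw [star_mul, hP.isHermitian.apply, hr.star_eq]; noncomm_ring
    have hshift : N + ε • 1 = P + ε • (1 - single 0 0 1) := by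
      simp only [P, smul_sub]; abel
    refine ⟨X, ?_⟩
    rw [hshift]
    ext i j
    simp only [mul_apply, conjTranspose_apply, Fin.sum_univ_succ, X, of_apply, Fin.cons_zero,
      Fin.cons_succ, hrow]
    refine Fin.cases ?_ (fun i => ?_) i <;> refine Fin.cases ?_ (fun j => ?_) j
    · simp [hPr]
    · simp [hPr, (Fin.succ_ne_zero _).symm]
    · simp [mul_assoc, hrP, (Fin.succ_ne_zero _).symm]
    · have hZij := congrFun (congrFun hZ i) j
      simp only [mul_apply, conjTranspose_apply] at hZij
      simp only [Fin.cons_succ, hZij, add_apply, of_apply, smul_apply, one_apply, smul_ite,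
        smul_zero, sub_apply, Fin.succ_inj, (Fin.succ_ne_zero _).symm, and_self, not_false_eq_true,
        single_apply_of_ne, sub_zero]
      abel

end CStarAlgebra

theorem nonneg_of_forall_add_smul_nonneg {E : Type*} [AddCommGroup E] [Module ℝ E]
    [TopologicalSpace E] [ContinuousAdd E] [ContinuousSMul ℝ E] [PartialOrder E]
    [ClosedIciTopology E] {x t : E} (h : ∀ ε : ℝ, 0 < ε → 0 ≤ x + ε • t) : 0 ≤ x := by
  have hlim : Tendsto (fun ε : ℝ => x + ε • t) (𝓝[>] 0) (𝓝 x) := by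
    have : Tendsto (fun ε : ℝ => x + ε • t) (𝓝 0) (𝓝 (x + (0 : ℝ) • t)) :=
      tendsto_const_nhds.add (tendsto_id.smul_const t)
    simpa using this.mono_left nhdsWithin_le_nhds
  exact ge_of_tendsto hlim (eventually_nhdsWithin_of_forall h)

namespace IsCPDKernel

variable {S A B C : Type*} [CStarAlgebra A] [CStarAlgebra B]
  [NonUnitalCStarAlgebra C] [PartialOrder C] [StarOrderedRing C] {L : S → S → (B →L[ℂ] C)}

theorem sum_conjTranspose_mul_self_nonneg (hL : IsCPDKernel L) {m n : ℕ} (σ : Fin n → S)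
    (X : Matrix (Fin m) (Fin n) B) (c : Fin n → C) :
    0 ≤ ∑ i, ∑ j, star (c i) * L (σ i) (σ j) ((Xᴴ * X) i j) * c j := by
  have : ∑ i, ∑ j, star (c i) * L (σ i) (σ j) ((Xᴴ * X) i j) * c j =
      ∑ k, ∑ i, ∑ j, star (c i) * L (σ i) (σ j) (star (X k i) * X k j) * c j := by
    simp only [mul_apply, conjTranspose_apply, map_sum, mul_sum, sum_mul]
    exact sum_comm_cycle
  exact this ▸ sum_nonneg fun k _ => hL n σ (X k) c

variable [PartialOrder B] [StarOrderedRing B]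

theorem posSemidef {K : S → S → (A →L[ℂ] B)} (hK : IsCPDKernel K) {n : ℕ} (σ : Fin n → S)
    (a : Fin n → A) : (of fun i j => K (σ i) (σ j) (star (a i) * a j)).PosSemidef :=
  posSemidef_iff_forall_dotProduct_mulVec_nonneg.mpr fun b => by
    simpa [dotProduct, mulVec, mul_sum, mul_assoc] using hK n σ a b

theorem sum_nonneg_of_posSemidef (hL : IsCPDKernel L) {n : ℕ} (σ : Fin n → S)
    {N : Matrix (Fin n) (Fin n) B} (hN : N.PosSemidef) (c : Fin n → C) :
    0 ≤ ∑ i, ∑ j, star (c i) * L (σ i) (σ j) (N i j) * c j := by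
  refine nonneg_of_forall_add_smul_nonneg (t := ∑ i, star (c i) * L (σ i) (σ i) 1 * c i)
    fun ε hε => ?_
  obtain ⟨X, hX⟩ := hN.exists_conjTranspose_mul_self_eq_add_smul_one hε
  have hdiag : ∀ i j,
      star (c i) * L (σ i) (σ j) ((ε • 1 : Matrix (Fin n) (Fin n) B) i j) * c j =
        if i = j then ε • (star (c i) * L (σ i) (σ i) 1 * c i) else 0 := by
    intro i j
    split_ifs with h
    · simp [h, ContinuousLinearMap.map_smul_of_tower, mul_smul_comm, smul_mul_assoc]
    · simp [h]
  convert hL.sum_conjTranspose_mul_self_nonneg σ X c using 1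
  simp only [hX, Matrix.add_apply, map_add, mul_add, add_mul, sum_add_distrib, hdiag,
    sum_ite_eq, mem_univ, if_true, smul_sum]

end IsCPDKernel

/-- The Schur composition of CPD-kernels is CPD: if `K` is a CPD-kernel over `S` from
`A` to `B` and `L` a CPD-kernel over `S` from `B` to `C`, then
`(L∘K)^{σ,σ'} = L^{σ,σ'} ∘ K^{σ,σ'}` is a CPD-kernel over `S` from `A` to `C`. -/
theorem composition_of_CPD_kernels {S A B C : Type*}
    [CStarAlgebra A]
    [CStarAlgebra B] [PartialOrder B] [StarOrderedRing B]
    [NonUnitalCStarAlgebra C] [PartialOrder C] [StarOrderedRing C]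
    (K : S → S → (A →L[ℂ] B)) (L : S → S → (B →L[ℂ] C))
    (hK : IsCPDKernel K) (hL : IsCPDKernel L) :
    IsCPDKernel (fun σ σ' => (L σ σ').comp (K σ σ')) := fun _ σ a c =>
  hL.sum_nonneg_of_posSemidef σ (hK.posSemidef σ a) c
end

section
/- Schönberg correspondence (ℂ-valued, pointwise form): if l : S × S → ℂ is a hermitian conditionally positive definite kernel, then for every t ≥ 0 the kernel e_t(σ,σ') := exp(t·l(σ,σ')) is positive definite on S. -/
/-!
Fix `σ₀ : S`. Putting the coefficient `-∑ zᵢ` at `σ₀` shows that the shifted kernel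
`K(σ,σ') = l(σ,σ') - l(σ,σ₀) - l(σ₀,σ') + l(σ₀,σ₀)` of a conditionally positive definite `l`
is positive definite. By the Schur product theorem every Hadamard power of a positive
semidefinite matrix is positive semidefinite, hence so is its entrywise exponential, a convergent
series of nonnegative multiples of these powers. Finally hermitian symmetry gives `exp(t l(σ,σ')) = a(σ) exp(t K(σ,σ')) conj(a(σ'))` with
`a(σ) = exp(t l(σ,σ₀) - t l(σ₀,σ₀)/2)`, and such a conjugation preserves positive definiteness.
-/

open scoped ComplexOrder

/-- A kernel is conditionally positive definite if the quadratic forms are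
nonnegative whenever the coefficients sum to zero. -/
def IsCondPosDefKernel {S : Type*} (k : S → S → ℂ) : Prop :=
  ∀ (n : ℕ) (σ : Fin n → S) (z : Fin n → ℂ), (∑ i, z i) = 0 →
    0 ≤ ∑ i, ∑ j, (starRingEnd ℂ) (z i) * k (σ i) (σ j) * z j

namespace Matrix

theorem PosSemidef.map_pow {n 𝕜 : Type*} [Fintype n] [RCLike 𝕜] {A : Matrix n n 𝕜}
    (hA : A.PosSemidef) : ∀ m : ℕ, (A.map (· ^ m)).PosSemidef
  | 0 => by
    convert posSemidef_vecMulVec_self_star (1 : n → 𝕜)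
    ext; simp
  | m + 1 => by
    convert (hA.map_pow m).hadamard hA using 1
    ext; simp [pow_succ]

theorem PosSemidef.map_exp {n : Type*} [Fintype n] {A : Matrix n n ℂ} (hA : A.PosSemidef) :
    (A.map Complex.exp).PosSemidef := by
  refine .of_dotProduct_mulVec_nonneg (hA.isHermitian.map _ fun z => Complex.exp_conj z)
    fun x => ?_
  have hterm (m : ℕ) : 0 ≤ star x ⬝ᵥ (((m.factorial : ℂ)⁻¹ • A.map (· ^ m)) *ᵥ x) :=
    ((hA.map_pow m).smul (by positivity)).dotProduct_mulVec_nonneg x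
  have hsum : HasSum (fun m : ℕ => star x ⬝ᵥ (((m.factorial : ℂ)⁻¹ • A.map (· ^ m)) *ᵥ x))
      (star x ⬝ᵥ (A.map Complex.exp *ᵥ x)) := by
    simp only [dotProduct, mulVec, smul_apply, map_apply, smul_eq_mul]
    refine hasSum_sum fun i _ => (hasSum_sum fun j _ => ?_).mul_left _
    simpa [div_eq_inv_mul, Complex.exp_eq_exp_ℂ] using
      (NormedSpace.expSeries_div_hasSum_exp (A i j)).mul_right (x j)
  exact hsum.nonneg hterm

end Matrix

theorem isPosDefKernel_of_posSemidef_submatrix {S : Type*} {k : S → S → ℂ}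
    (hk : ∀ n (σ : Fin n → S), ((Matrix.of k).submatrix σ σ).PosSemidef) :
    IsPosDefKernel k := fun n σ z => by
  simpa [dotProduct, Matrix.mulVec, Finset.mul_sum, mul_assoc] using
    (hk n σ).dotProduct_mulVec_nonneg z

namespace IsPosDefKernel

variable {S : Type*} {k : S → S → ℂ}

theorem posSemidef_submatrix (hpd : IsPosDefKernel k) (hk : (Matrix.of k).IsHermitian)
    {n : ℕ} (σ : Fin n → S) : ((Matrix.of k).submatrix σ σ).PosSemidef :=
  .of_dotProduct_mulVec_nonneg (hk.submatrix σ) fun z => by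
    simpa [dotProduct, Matrix.mulVec, Finset.mul_sum, mul_assoc] using hpd n σ z

theorem exp (hpd : IsPosDefKernel k) (hk : (Matrix.of k).IsHermitian) :
    IsPosDefKernel fun σ σ' => Complex.exp (k σ σ') :=
  isPosDefKernel_of_posSemidef_submatrix fun _ σ => (hpd.posSemidef_submatrix hk σ).map_exp

theorem const_mul (hpd : IsPosDefKernel k) {c : ℂ} (hc : 0 ≤ c) :
    IsPosDefKernel fun σ σ' => c * k σ σ' := fun n σ z => by
  have hform : ∑ i, ∑ j, (starRingEnd ℂ) (z i) * (c * k (σ i) (σ j)) * z j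
      = c * ∑ i, ∑ j, (starRingEnd ℂ) (z i) * k (σ i) (σ j) * z j := by
    simp only [Finset.mul_sum]
    exact Finset.sum_congr rfl fun i _ => Finset.sum_congr rfl fun j _ => by ring
  exact hform ▸ mul_nonneg hc (hpd n σ z)

theorem mul_conj (hpd : IsPosDefKernel k) (a : S → ℂ) :
    IsPosDefKernel fun σ σ' => a σ * k σ σ' * (starRingEnd ℂ) (a σ') := fun n σ z => by
  convert hpd n σ fun i => (starRingEnd ℂ) (a (σ i)) * z i using 3 with i _ j
  simp only [map_mul, Complex.conj_conj]
  ring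

end IsPosDefKernel

theorem IsCondPosDefKernel.isPosDefKernel_shift {S : Type*} {k : S → S → ℂ}
    (hcpd : IsCondPosDefKernel k) (σ₀ : S) :
    IsPosDefKernel fun σ σ' => k σ σ' - k σ σ₀ - k σ₀ σ' + k σ₀ σ₀ := fun n σ z => by
  convert hcpd (n + 1) (Fin.snoc σ σ₀) (Fin.snoc z (-∑ i, z i))
    (by simp [Fin.sum_univ_castSucc]) using 1
  simp only [Fin.sum_univ_castSucc, Fin.snoc_castSucc, Fin.snoc_last, mul_sub, sub_mul, mul_add,
    add_mul, Finset.sum_add_distrib, Finset.sum_sub_distrib, Finset.mul_sum, Finset.sum_mul,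
    map_neg, map_sum, neg_mul, mul_neg, Finset.sum_neg_distrib]
  rw [Finset.sum_comm (f := fun j i => (starRingEnd ℂ) (z i) * k σ₀ (σ j) * z j),
    Finset.sum_comm (f := fun j i => (starRingEnd ℂ) (z i) * k σ₀ σ₀ * z j)]
  ring

/-- Schönberg correspondence (pointwise form): if `l` is a hermitian conditionally
positive definite kernel, then `exp(t·l)` is positive definite for every `t ≥ 0`. -/
theorem schoenberg_correspondence {S : Type*} (l : S → S → ℂ)
    (hherm : ∀ σ σ' : S, l σ' σ = (starRingEnd ℂ) (l σ σ'))
    (hcpd : IsCondPosDefKernel l) :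
    ∀ t : ℝ, 0 ≤ t →
      IsPosDefKernel (fun σ σ' => Complex.exp ((t : ℂ) * l σ σ')) := by
  intro t ht
  rcases isEmpty_or_nonempty S with _ | ⟨⟨σ₀⟩⟩
  · intro n σ z
    have := Function.isEmpty σ
    simp
  set K := fun σ σ' => (t : ℂ) * (l σ σ' - l σ σ₀ - l σ₀ σ' + l σ₀ σ₀)
  have hK_herm : (Matrix.of K).IsHermitian := .ext fun σ σ' => by
    simp only [K, Matrix.of_apply, star_mul', star_sub, star_add, Complex.star_def,
      Complex.conj_ofReal, ← hherm]
    ring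
  have hK : IsPosDefKernel K :=
    (hcpd.isPosDefKernel_shift σ₀).const_mul (Complex.zero_le_real.mpr ht)
  convert (hK.exp hK_herm).mul_conj fun σ => Complex.exp (t * l σ σ₀ - t * l σ₀ σ₀ / 2)
    using 3 with σ σ'
  rw [← Complex.exp_conj, ← Complex.exp_add, ← Complex.exp_add]
  congr 1
  simp only [K, map_sub, map_mul, map_div₀, Complex.conj_ofReal, map_ofNat, ← hherm]
  ring
end

section
/- Let T : E → F be a φ-map between Hilbert modules, where E is a Hilbert module over a unital C*-algebra B, F a Hilbert C-module, and φ : B → C a completely positive map, i.e., ⟨T(x), T(x')⟩ = φ(⟨x, x'⟩) for all x, x' ∈ E. Let (ℱ, ζ) be the GNS-construction of φ (a correspondence from B to C with cyclic vector ζ such that ⟨ζ, bζ⟩ = φ(b)). Then the map x ⊙ (bζc) ↦ T(xb)c extends to a well-defined isometry v : E ⊙ ℱ → F with v(x ⊙ ζ) = T(x) for all x ∈ E. -/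
/-- A Hilbert module over the C*-algebra `B`: a complex normed space `carrier` with a
right `B`-action `sm` and a `B`-valued inner product `ip`, positive, definite,
right-`B`-linear, complete in the norm `‖x‖ = √‖⟨x,x⟩‖`. -/
structure HilbertCStarModule (B : Type*) [NonUnitalCStarAlgebra B] [PartialOrder B]
    [StarOrderedRing B] where
  carrier : Type*
  [nacg : NormedAddCommGroup carrier]
  [mod : Module ℂ carrier]
  sm : carrier → B → carrier
  sm_add : ∀ x (b c : B), sm x (b + c) = sm x b + sm x c
  add_sm : ∀ x y (b : B), sm (x + y) b = sm x b + sm y b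
  sm_mul : ∀ x (b c : B), sm x (b * c) = sm (sm x b) c
  ip : carrier → carrier → B
  inner_add_right : ∀ x y z, ip x (y + z) = ip x y + ip x z
  inner_smul_right : ∀ x y (c : ℂ), ip x (c • y) = c • ip x y
  star_inner : ∀ x y, star (ip x y) = ip y x
  inner_sm_right : ∀ x y b, ip x (sm y b) = ip x y * b
  inner_nonneg : ∀ x, 0 ≤ ip x x
  inner_definite : ∀ x, ip x x = 0 → x = 0
  norm_eq : ∀ x, ‖x‖ = Real.sqrt ‖ip x x‖
  [complete : CompleteSpace carrier]

attribute [instance] HilbertCStarModule.nacg HilbertCStarModule.mod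
  HilbertCStarModule.complete

/-- A correspondence from `A` to `B`: a Hilbert `B`-module together with a
nondegenerate left action of `A` by adjointable operators. -/
structure Correspondence (A B : Type*) [NonUnitalCStarAlgebra A]
    [NonUnitalCStarAlgebra B] [PartialOrder B] [StarOrderedRing B]
    extends HilbertCStarModule B where
  la : A → carrier → carrier
  la_add : ∀ (a : A) x y, la a (x + y) = la a x + la a y
  add_la : ∀ (a b : A) x, la (a + b) x = la a x + la b x
  la_mul : ∀ (a b : A) x, la (a * b) x = la a (la b x)
  la_smul : ∀ (a : A) (c : ℂ) x, la a (c • x) = c • la a x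
  la_sm : ∀ (a : A) x (b : B), la a (sm x b) = sm (la a x) b
  la_star : ∀ (a : A) x y, ip x (la a y) = ip (la (star a) x) y
  nondeg : Dense ((Submodule.span ℂ
    {y : carrier | ∃ (a : A) (x : carrier), y = la a x} :
      Submodule ℂ carrier) : Set carrier)

/-- A linear map `φ : B → C` between C*-algebras is completely positive if
`∑ᵢⱼ cᵢ* φ(bᵢ* bⱼ) cⱼ ≥ 0` for all finite families. -/
def IsCompletelyPositive {B C : Type*} [CStarAlgebra B] [NonUnitalCStarAlgebra C]
    [PartialOrder C] [StarOrderedRing C] (φ : B →L[ℂ] C) : Prop :=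
  ∀ (n : ℕ) (b : Fin n → B) (c : Fin n → C),
    0 ≤ ∑ i, ∑ j, star (c i) * φ (star (b i) * b j) * c j

/-!
Because `⟨bζ, b'ζ⟩ = φ(b* b')` and `⟨T x, T x'⟩ = φ(⟨x, x'⟩)`, the elementary tensors `x ⊙ bζc` and
`x ⊙ ζ` have the same inner products as `T(xb)c` and `T x`. An assignment on a family that
preserves inner products is well defined and isometric on the linear span (a vector of norm zero
goes to a vector of norm zero), hence extends by continuity to its closure. Cyclicity of `ζ` and
totality of the elementary tensors make this span dense in `E ⊙ ℱ`; the tensor map is continuous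
in its second variable since `‖x ⊙ y‖² = ‖⟨y, ⟨x, x⟩ y⟩‖` and the left action is bounded by the
closed graph theorem.
-/

open Filter Topology Set Submodule

lemma dense_span_iUnion_image {R X P Q : Type*} [Semiring R] [AddCommMonoid P] [Module R P]
    [TopologicalSpace P] [AddCommMonoid Q] [Module R Q] [TopologicalSpace Q] [ContinuousAdd Q]
    [ContinuousConstSMul R Q] (t : X → P →L[R] Q) {S : Set P} (hS : Dense (span R S : Set P))
    (ht : Dense (span R (range fun p : X × P => t p.1 p.2) : Set Q)) :
    Dense (span R (⋃ x, t x '' S) : Set Q) := by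
  set D := span R (⋃ x, t x '' S)
  have hmem : ∀ x y, t x y ∈ D.topologicalClosure := fun x y => by
    have hSD : ∀ z ∈ S, t x z ∈ D.topologicalClosure := fun z hz =>
      D.le_topologicalClosure (subset_span (mem_iUnion.mpr ⟨x, z, hz, rfl⟩))
    have hle : closure (span R S : Set P) ⊆ D.topologicalClosure.comap (t x : P →ₗ[R] Q) :=
      closure_minimal (span_le.mpr hSD) (D.isClosed_topologicalClosure.preimage (t x).continuous)
    exact hle (hS.closure_eq ▸ mem_univ y)
  rw [dense_iff_topologicalClosure_eq_top, eq_top_iff, ← dense_iff_topologicalClosure_eq_top.mp ht]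
  exact topologicalClosure_minimal _ (span_le.mpr (range_subset_iff.mpr fun p => hmem p.1 p.2))
    D.isClosed_topologicalClosure

namespace HilbertCStarModule

variable {A : Type*} [NonUnitalCStarAlgebra A] [PartialOrder A] [StarOrderedRing A]

section

variable (M : HilbertCStarModule A)

lemma ip_add_left (x y z : M.carrier) : M.ip (x + y) z = M.ip x z + M.ip y z := by
  rw [← M.star_inner, M.inner_add_right, star_add, M.star_inner, M.star_inner]

lemma ip_smul_left (c : ℂ) (x y : M.carrier) : M.ip (c • x) y = star c • M.ip x y := by
  rw [← M.star_inner, M.inner_smul_right, star_smul, M.star_inner]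

lemma ip_sm_left (x y : M.carrier) (b : A) : M.ip (M.sm x b) y = star b * M.ip x y := by
  rw [← M.star_inner, M.inner_sm_right, star_mul, M.star_inner]

def ipₛₗ : M.carrier →ₗ⋆[ℂ] M.carrier →ₗ[ℂ] A :=
  LinearMap.mk₂'ₛₗ _ _ M.ip M.ip_add_left M.ip_smul_left M.inner_add_right
    fun c x y => M.inner_smul_right x y c

@[simp] lemma ipₛₗ_apply (x y : M.carrier) : M.ipₛₗ x y = M.ip x y := rfl

@[simp] lemma ip_zero_left (x : M.carrier) : M.ip 0 x = 0 := M.ipₛₗ.map_zero₂ x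

@[simp] lemma ip_zero_right (x : M.carrier) : M.ip x 0 = 0 := map_zero (M.ipₛₗ x)

lemma ip_sub_left (x y z : M.carrier) : M.ip (x - y) z = M.ip x z - M.ip y z :=
  M.ipₛₗ.map_sub₂ x y z

lemma ip_sub_right (x y z : M.carrier) : M.ip x (y - z) = M.ip x y - M.ip x z :=
  map_sub (M.ipₛₗ x) y z

lemma norm_sq_eq (x : M.carrier) : ‖x‖ ^ 2 = ‖M.ip x x‖ := by
  rw [M.norm_eq, Real.sq_sqrt (norm_nonneg _)]

lemma norm_smul_eq (c : ℂ) (x : M.carrier) : ‖c • x‖ = ‖c‖ * ‖x‖ := by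
  rw [M.norm_eq, ip_smul_left, M.inner_smul_right, smul_smul, norm_smul, norm_mul, norm_star,
    Real.sqrt_mul (mul_self_nonneg _), Real.sqrt_mul_self (norm_nonneg _), ← M.norm_eq]

instance normedSpace : NormedSpace ℂ M.carrier where
  norm_smul_le c x := (M.norm_smul_eq c x).le

lemma ip_mul_ip_le (x y : M.carrier) : M.ip y x * M.ip x y ≤ ‖x‖ ^ 2 • M.ip y y := by
  rcases eq_or_ne x 0 with rfl | hx
  · simp
  have hr : 0 < ‖x‖ ^ 2 := by positivity
  have hconj : M.ip y x * M.ip x x * M.ip x y ≤ ‖x‖ ^ 2 • (M.ip y x * M.ip x y) := by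
    rw [M.norm_sq_eq, ← M.star_inner x y]
    exact CStarAlgebra.star_left_conjugate_le_norm_smul (M.star_inner x x)
  -- expand `0 ≤ ⟪x a - ‖x‖² y, x a - ‖x‖² y⟫` with `a = ⟪x, y⟫`
  have hpos : 0 ≤ M.ip y x * M.ip x x * M.ip x y - (2 * ‖x‖ ^ 2) • (M.ip y x * M.ip x y)
      + (‖x‖ ^ 2 * ‖x‖ ^ 2) • M.ip y y := by
    convert M.inner_nonneg (M.sm x (M.ip x y) - ((‖x‖ ^ 2 : ℝ) : ℂ) • y) using 1
    simp only [ip_sub_left, ip_sub_right, ip_sm_left, M.inner_sm_right, ip_smul_left,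
      M.inner_smul_right, M.star_inner, Complex.star_def, Complex.conj_ofReal]
    simp only [Complex.coe_smul, sub_mul, smul_mul_assoc]
    module
  have h : ‖x‖ ^ 2 • (M.ip y x * M.ip x y) ≤ ‖x‖ ^ 2 • (‖x‖ ^ 2 • M.ip y y) := by
    rw [← sub_nonneg]
    convert add_nonneg hpos (sub_nonneg.mpr hconj) using 1
    module
  exact (smul_le_smul_iff_of_pos_left hr).mp h

lemma norm_ip_le (x y : M.carrier) : ‖M.ip x y‖ ≤ ‖x‖ * ‖y‖ := by
  have h : ‖M.ip x y‖ ^ 2 ≤ (‖x‖ * ‖y‖) ^ 2 := calc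
    ‖M.ip x y‖ ^ 2 = ‖M.ip y x * M.ip x y‖ := by
      rw [← M.star_inner x y, CStarRing.norm_star_mul_self, sq]
    _ ≤ ‖‖x‖ ^ 2 • M.ip y y‖ := by
      refine CStarAlgebra.norm_le_norm_of_nonneg_of_le ?_ (M.ip_mul_ip_le x y)
      rw [← M.star_inner x y]
      exact star_mul_self_nonneg _
    _ = (‖x‖ * ‖y‖) ^ 2 := by
      rw [norm_smul, Real.norm_of_nonneg (by positivity), ← M.norm_sq_eq, mul_pow]
  exact (pow_le_pow_iff_left₀ (norm_nonneg _) (by positivity) two_ne_zero).mp h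

noncomputable def ipSL : M.carrier →L⋆[ℂ] M.carrier →L[ℂ] A :=
  LinearMap.mkContinuous₂ M.ipₛₗ 1 fun x y => by simpa using M.norm_ip_le x y

lemma ipSL_apply (x y : M.carrier) : M.ipSL x y = M.ip x y := rfl

lemma continuous_ip : Continuous fun p : M.carrier × M.carrier => M.ip p.1 p.2 := by
  simp_rw [← M.ipSL_apply]
  fun_prop

lemma ip_linearCombination {ι : Type*} (g : ι → M.carrier) (w w' : ι →₀ ℂ) :
    M.ip (Finsupp.linearCombination ℂ g w) (Finsupp.linearCombination ℂ g w') =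
      w'.sum fun j c' => c' • w.sum fun i c => star c • M.ip (g i) (g j) := by
  rw [← ipₛₗ_apply]
  simp only [Finsupp.linearCombination_apply, map_finsuppSum, LinearMap.finsupp_sum_apply,
    map_smulₛₗ, LinearMap.smul_apply, RingHom.id_apply, starRingEnd_apply, ipₛₗ_apply]

lemma eq_zero_of_forall_ip_eq_zero {S : Set M.carrier} (hS : Dense (span ℂ S : Set M.carrier))
    {w : M.carrier} (h : ∀ z ∈ S, M.ip z w = 0) : w = 0 := by
  have hker : span ℂ S ≤ LinearMap.ker (M.ipSL w : M.carrier →ₗ[ℂ] A) :=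
    span_le.mpr fun z hz => by simp [ipSL_apply, ← M.star_inner z w, h z hz]
  have htop := topologicalClosure_minimal _ hker (M.ipSL w).isClosed_ker
  rw [dense_iff_topologicalClosure_eq_top.mp hS, top_le_iff] at htop
  exact M.inner_definite w (LinearMap.ext_iff.mp (LinearMap.ker_eq_top.mp htop) w)

end

theorem exists_ip_preserving_extension {M N : HilbertCStarModule A} {ι : Type*}
    (g : ι → M.carrier) (f : ι → N.carrier) (hfg : ∀ i j, N.ip (f i) (f j) = M.ip (g i) (g j))
    (hg : Dense (span ℂ (range g) : Set M.carrier)) :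
    ∃ v : M.carrier →L[ℂ] N.carrier, (∀ p q, N.ip (v p) (v q) = M.ip p q) ∧ ∀ i, v (g i) = f i := by
  set α := Finsupp.linearCombination ℂ g
  set β := Finsupp.linearCombination ℂ f
  have hαβ : ∀ w w', N.ip (β w) (β w') = M.ip (α w) (α w') := fun w w' => by
    simp only [α, β, ip_linearCombination, hfg]
  have hker : LinearMap.ker α ≤ LinearMap.ker β := fun w hw =>
    N.inner_definite _ (by rw [hαβ, LinearMap.mem_ker.mp hw, ip_zero_left])
  let v₀ : LinearMap.range α →ₗ[ℂ] N.carrier :=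
    (LinearMap.ker α).liftQ β hker ∘ₗ α.quotKerEquivRange.symm.toLinearMap
  have hv₀ : ∀ w, v₀ ⟨α w, LinearMap.mem_range_self α w⟩ = β w := fun w => by simp [v₀]
  have hv₀ip : ∀ d d' : LinearMap.range α, N.ip (v₀ d) (v₀ d') = M.ip d d' := by
    rintro ⟨_, w, rfl⟩ ⟨_, w', rfl⟩
    rw [hv₀, hv₀, hαβ]
  let v₁ : LinearMap.range α →L[ℂ] N.carrier := v₀.mkContinuous 1 fun d => by
    rw [one_mul, N.norm_eq, hv₀ip, ← M.norm_eq]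
    rfl
  have hαdense : DenseRange α := by
    rwa [DenseRange, ← LinearMap.coe_range, Finsupp.range_linearCombination]
  have hdense : DenseRange (LinearMap.range α).subtypeL := by
    rwa [DenseRange, coe_subtypeL, coe_subtype, Subtype.range_coe, LinearMap.coe_range]
  let v := v₁.extend (LinearMap.range α).subtypeL
  have hvα : ∀ w, v (α w) = β w := fun w =>
    (v₁.extend_eq hdense isUniformEmbedding_subtype_val.isUniformInducing _).trans (hv₀ w)
  refine ⟨v, fun p q => ?_, fun i => ?_⟩
  · refine hαdense.induction_on₂ (p := fun p q => N.ip (v p) (v q) = M.ip p q) ?_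
      (fun w w' => by rw [hvα, hvα, hαβ]) p q
    exact isClosed_eq (N.continuous_ip.comp (v.continuous.prodMap v.continuous)) M.continuous_ip
  · simpa [α, β] using hvα (Finsupp.single i 1)

end HilbertCStarModule

namespace Correspondence

variable {A B : Type*} [NonUnitalCStarAlgebra A] [NonUnitalCStarAlgebra B] [PartialOrder B]
  [StarOrderedRing B] (ℱ : Correspondence A B)

def laₗ (a : A) : ℱ.carrier →ₗ[ℂ] ℱ.carrier where
  toFun := ℱ.la a
  map_add' := ℱ.la_add a
  map_smul' := ℱ.la_smul a

lemma continuous_la (a : A) : Continuous (ℱ.la a) := by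
  refine (ℱ.laₗ a).continuous_of_seq_closed_graph fun u x y hu hy => ?_
  have hw : ∀ w, ℱ.ip w y = ℱ.ip w (ℱ.la a x) := fun w => by
    have h₁ : Tendsto (fun n => ℱ.ip w (ℱ.la a (u n))) atTop (𝓝 (ℱ.ip w y)) :=
      ((ℱ.ipSL w).continuous.tendsto y).comp hy
    have h₂ : Tendsto (fun n => ℱ.ip w (ℱ.la a (u n))) atTop (𝓝 (ℱ.ip w (ℱ.la a x))) := by
      simp_rw [ℱ.la_star]
      exact ((ℱ.ipSL _).continuous.tendsto x).comp hu
    exact tendsto_nhds_unique h₁ h₂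
  refine sub_eq_zero.mp (ℱ.inner_definite _ ?_)
  rw [ℱ.ip_sub_right, hw]
  exact sub_self _

lemma ip_la_la_of_ip_la {φ : A → B} {ζ : ℱ.carrier} (hζ : ∀ a, ℱ.ip ζ (ℱ.la a ζ) = φ a)
    (a a' : A) : ℱ.ip (ℱ.la a ζ) (ℱ.la a' ζ) = φ (star a * a') := by
  rw [← hζ, ℱ.la_mul, ℱ.la_star (star a), star_star]

end Correspondence

section InteriorTensorProduct

variable {B C : Type*} [NonUnitalCStarAlgebra B] [PartialOrder B] [StarOrderedRing B]
  [NonUnitalCStarAlgebra C] [PartialOrder C] [StarOrderedRing C]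
  {E : HilbertCStarModule B} {ℱ : Correspondence B C} {G : HilbertCStarModule C}
  {t : E.carrier → ℱ.carrier → G.carrier}

lemma tensor_smul_right
    (ht : ∀ x x' y y', G.ip (t x y) (t x' y') = ℱ.ip y (ℱ.la (E.ip x x') y'))
    (htotal : Dense (span ℂ (range fun p : E.carrier × ℱ.carrier => t p.1 p.2) : Set G.carrier))
    (x : E.carrier) (c : ℂ) (y : ℱ.carrier) : t x (c • y) = c • t x y := by
  refine sub_eq_zero.mp (G.eq_zero_of_forall_ip_eq_zero htotal ?_)
  rintro _ ⟨⟨x', y'⟩, rfl⟩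
  rw [G.ip_sub_right, G.inner_smul_right, ht, ht, ℱ.la_smul, ℱ.inner_smul_right, sub_self]

lemma continuous_tensor_right
    (ht : ∀ x x' y y', G.ip (t x y) (t x' y') = ℱ.ip y (ℱ.la (E.ip x x') y'))
    (x : E.carrier) (hadd : ∀ y y', t x (y + y') = t x y + t x y') : Continuous (t x) := by
  refine continuous_of_tendsto_nhds_zero (AddMonoidHom.mk' (t x) hadd) ?_
  have hcont : Continuous fun y => √‖ℱ.ip y (ℱ.la (E.ip x x) y)‖ :=
    (ℱ.continuous_ip.comp (continuous_id.prodMk (ℱ.continuous_la _))).norm.sqrt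
  have hlim := hcont.tendsto 0
  rw [tendsto_zero_iff_norm_tendsto_zero]
  simpa [G.norm_eq, ht, map_zero (ℱ.laₗ _)] using hlim

end InteriorTensorProduct

theorem phi_map_factorization_general {B C : Type*} [CStarAlgebra B] [PartialOrder B] [StarOrderedRing B]
    [NonUnitalCStarAlgebra C] [PartialOrder C] [StarOrderedRing C]
    (φ : B →L[ℂ] C)
    (E : HilbertCStarModule B) (F : HilbertCStarModule C)
    (T : E.carrier → F.carrier)
    (hT : ∀ x x' : E.carrier, F.ip (T x) (T x') = φ (E.ip x x'))
    -- the GNS-construction `(ℱ, ζ)` of `φ`: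
    (ℱ : Correspondence B C) (ζ : ℱ.carrier)
    (hζ : ∀ b : B, ℱ.ip ζ (ℱ.la b ζ) = φ b)
    (hcyclic : Dense ((Submodule.span ℂ
      {y : ℱ.carrier | ∃ (b : B) (c : C), y = ℱ.sm (ℱ.la b ζ) c} :
        Submodule ℂ ℱ.carrier) : Set ℱ.carrier))
    -- the interior tensor product `G = E ⊙ ℱ`, presented by the map `t`:
    (G : HilbertCStarModule C) (t : E.carrier → ℱ.carrier → G.carrier)
    (ht : ∀ (x x' : E.carrier) (y y' : ℱ.carrier),
      G.ip (t x y) (t x' y') = ℱ.ip y (ℱ.la (E.ip x x') y'))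
    (htadd₂ : ∀ (x : E.carrier) (y y' : ℱ.carrier), t x (y + y') = t x y + t x y')
    (httotal : Dense ((Submodule.span ℂ
      (Set.range fun p : E.carrier × ℱ.carrier => t p.1 p.2) :
        Submodule ℂ G.carrier) : Set G.carrier)) :
    ∃ v : G.carrier → F.carrier,
      (∀ p q : G.carrier, v (p + q) = v p + v q) ∧
      (∀ p q : G.carrier, F.ip (v p) (v q) = G.ip p q) ∧
      (∀ (x : E.carrier) (b : B) (c : C),
        v (t x (ℱ.sm (ℱ.la b ζ) c)) = F.sm (T (E.sm x b)) c) ∧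
      (∀ x : E.carrier, v (t x ζ) = T x) := by
  let g : (E.carrier × B × C) ⊕ E.carrier → G.carrier :=
    Sum.elim (fun q => t q.1 (ℱ.sm (ℱ.la q.2.1 ζ) q.2.2)) (fun x => t x ζ)
  let f : (E.carrier × B × C) ⊕ E.carrier → F.carrier :=
    Sum.elim (fun q => F.sm (T (E.sm q.1 q.2.1)) q.2.2) T
  have hfg : ∀ i j, F.ip (f i) (f j) = G.ip (g i) (g j) := by
    rintro (⟨x, b, c⟩ | x) (⟨x', b', c'⟩ | x') <;>
      simp only [g, f, Sum.elim_inl, Sum.elim_inr, ht, hT, F.inner_sm_right, F.ip_sm_left,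
        E.inner_sm_right, E.ip_sm_left, ℱ.la_sm, ℱ.inner_sm_right, ℱ.ip_sm_left, ← ℱ.la_mul, hζ,
        ℱ.ip_la_la_of_ip_la hζ, mul_assoc]
  have hg : Dense (span ℂ (range g) : Set G.carrier) := by
    let tL : E.carrier → ℱ.carrier →L[ℂ] G.carrier := fun x =>
      ⟨⟨⟨t x, htadd₂ x⟩, tensor_smul_right ht httotal x⟩, continuous_tensor_right ht x (htadd₂ x)⟩
    refine (dense_span_iUnion_image tL hcyclic httotal).mono (span_mono ?_)
    rintro _ ⟨_, ⟨x, rfl⟩, _, ⟨b, c, rfl⟩, rfl⟩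
    exact ⟨Sum.inl (x, b, c), rfl⟩
  obtain ⟨v, hvip, hvg⟩ := HilbertCStarModule.exists_ip_preserving_extension g f hfg hg
  exact ⟨v, map_add v, hvip, fun x b c => hvg (Sum.inl (x, b, c)), fun x => hvg (Sum.inr x)⟩

/-- If `T : E → F` is a `φ`-map for a completely positive map `φ : B → C` (that is,
`⟨T x, T x'⟩ = φ(⟨x,x'⟩)`), and `(ℱ, ζ)` is the GNS-construction of `φ`, then the map
`x ⊙ (bζc) ↦ T(xb)c` extends to a well-defined isometry `v : E ⊙ ℱ → F` with
`v (x ⊙ ζ) = T x`. Here the interior tensor product `E ⊙ ℱ` is presented by a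
balanced map `t` with `⟨t x y, t x' y'⟩ = ⟨y, ⟨x,x'⟩ y'⟩` and total range. -/
theorem phi_map_factorization {B C : Type*} [CStarAlgebra B] [PartialOrder B] [StarOrderedRing B]
    [NonUnitalCStarAlgebra C] [PartialOrder C] [StarOrderedRing C]
    (φ : B →L[ℂ] C) (hφ : IsCompletelyPositive φ)
    (E : HilbertCStarModule B) (F : HilbertCStarModule C)
    (T : E.carrier → F.carrier)
    (hTadd : ∀ x y : E.carrier, T (x + y) = T x + T y)
    (hTsmul : ∀ (c : ℂ) (x : E.carrier), T (c • x) = c • T x)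
    (hT : ∀ x x' : E.carrier, F.ip (T x) (T x') = φ (E.ip x x'))
    -- the GNS-construction `(ℱ, ζ)` of `φ`:
    (ℱ : Correspondence B C) (ζ : ℱ.carrier)
    (hζ : ∀ b : B, ℱ.ip ζ (ℱ.la b ζ) = φ b)
    (hcyclic : Dense ((Submodule.span ℂ
      {y : ℱ.carrier | ∃ (b : B) (c : C), y = ℱ.sm (ℱ.la b ζ) c} :
        Submodule ℂ ℱ.carrier) : Set ℱ.carrier))
    -- the interior tensor product `G = E ⊙ ℱ`, presented by the map `t`:
    (G : HilbertCStarModule C) (t : E.carrier → ℱ.carrier → G.carrier)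
    (ht : ∀ (x x' : E.carrier) (y y' : ℱ.carrier),
      G.ip (t x y) (t x' y') = ℱ.ip y (ℱ.la (E.ip x x') y'))
    (htadd₁ : ∀ (x x' : E.carrier) (y : ℱ.carrier), t (x + x') y = t x y + t x' y)
    (htadd₂ : ∀ (x : E.carrier) (y y' : ℱ.carrier), t x (y + y') = t x y + t x y')
    (htbal : ∀ (x : E.carrier) (b : B) (y : ℱ.carrier),
      t (E.sm x b) y = t x (ℱ.la b y))
    (httotal : Dense ((Submodule.span ℂ
      (Set.range fun p : E.carrier × ℱ.carrier => t p.1 p.2) :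
        Submodule ℂ G.carrier) : Set G.carrier)) :
    ∃ v : G.carrier → F.carrier,
      (∀ p q : G.carrier, v (p + q) = v p + v q) ∧
      (∀ p q : G.carrier, F.ip (v p) (v q) = G.ip p q) ∧
      (∀ (x : E.carrier) (b : B) (c : C),
        v (t x (ℱ.sm (ℱ.la b ζ) c)) = F.sm (T (E.sm x b)) c) ∧
      (∀ x : E.carrier, v (t x ζ) = T x) :=
  phi_map_factorization_general φ E F T hT ℱ ζ hζ hcyclic G t ht htadd₂ httotal
end
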